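/- arXiv:2510.24691 — 5 statements merged into one kernel-verified Lean document; each statement's English description precedes it below -/
import Mathlib

section
/- Let A be an antichain of subsets of a finite set B (no member of A is a proper subset of another member of A), and let φ : 2^B → [0,1] be a function with φ(A) = 0 for every A ∉ A. For p ∈ (0,1), let B_p be a random subset of B including each element independently with probability p. Assume that for all integers 0 ≤ M ≤ N, C(N,M) p^M (1-p)^{N-M} ≤ M^M/(e^M M!) + p. Then E[φ(B_p)] ≤ max_{A ∈ A} (|A|^{|A|}/(e^{|A|} |A|!) · φ(A)) + p. -/
/-!
Since `φ` vanishes off `𝒜`, the expectation is `∑_{A ∈ 𝒜} p^|A| (1-p)^(N-|A|) φ(A)`. By the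
hypothesis on binomial probabilities, `C(N,|A|)` times each summand is at most
`(f(|A|) + p) φ(A) ≤ max_{A ∈ 𝒜} f(|A|) φ(A) + p`, where `f(M) = M^M / (e^M M!)`, and the LYM
inequality `∑_{A ∈ 𝒜} C(N,|A|)⁻¹ ≤ 1` turns these termwise bounds into the bound on the sum.
-/

open Finset

namespace Finset

variable {α 𝕜 : Type*} [Semifield 𝕜] [LinearOrder 𝕜] [IsStrictOrderedRing 𝕜]
  {B : Finset α} {𝒜 : Finset (Finset α)}

theorem sum_inv_choose_le_one_of_isAntichain_of_subset
    (h𝒜 : IsAntichain (· ⊆ ·) (𝒜 : Set (Finset α))) (h𝒜B : ∀ A ∈ 𝒜, A ⊆ B) :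
    ∑ A ∈ 𝒜, ((#B).choose #A : 𝕜)⁻¹ ≤ 1 := by
  classical
  obtain ⟨𝒜', rfl⟩ : ∃ 𝒜' : Finset (Finset B),
      𝒜'.map (mapEmbedding (.subtype (· ∈ B))).toEmbedding = 𝒜 := by
    refine ⟨𝒜.image (·.subtype (· ∈ B)), ?_⟩
    rw [map_eq_image, image_image]
    exact (image_congr fun A hA => subtype_map_of_mem fun x hx => h𝒜B A hA hx).trans image_id'
  rw [coe_map] at h𝒜
  simpa [sum_map] using
    lubell_yamamoto_meshalkin_inequality_sum_inv_choose (IsAntichain.image_relEmbedding_iff.1 h𝒜)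

theorem sum_le_of_isAntichain_of_choose_mul_le
    (h𝒜 : IsAntichain (· ⊆ ·) (𝒜 : Set (Finset α))) (h𝒜B : ∀ A ∈ 𝒜, A ⊆ B)
    {w : Finset α → 𝕜} {c : 𝕜} (hc : 0 ≤ c) (hw : ∀ A ∈ 𝒜, (#B).choose #A * w A ≤ c) :
    ∑ A ∈ 𝒜, w A ≤ c :=
  calc ∑ A ∈ 𝒜, w A ≤ ∑ A ∈ 𝒜, ((#B).choose #A : 𝕜)⁻¹ * c := by
        refine sum_le_sum fun A hA => ?_
        have hpos : (0 : 𝕜) < (#B).choose #A := by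
          exact_mod_cast Nat.choose_pos (card_le_card (h𝒜B A hA))
        rw [inv_mul_eq_div, le_div_iff₀' hpos]
        exact hw A hA
    _ = (∑ A ∈ 𝒜, ((#B).choose #A : 𝕜)⁻¹) * c := (sum_mul ..).symm
    _ ≤ c := mul_le_of_le_one_left hc (sum_inv_choose_le_one_of_isAntichain_of_subset h𝒜 h𝒜B)

end Finset

theorem antichain_expectation_general {α : Type*} (B : Finset α)
    (𝒜 : Finset (Finset α)) (h𝒜ne : 𝒜.Nonempty)
    (h𝒜B : ∀ A ∈ 𝒜, A ⊆ B)
    (h𝒜 : IsAntichain (· ⊆ ·) (𝒜 : Set (Finset α)))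
    (φ : Finset α → ℝ) (hφ0 : ∀ A, 0 ≤ φ A) (hφ1 : ∀ A, φ A ≤ 1)
    (hφsupp : ∀ A, A ∉ 𝒜 → φ A = 0)
    (p : ℝ) (hp : 0 < p)
    (hbin : ∀ M N : ℕ, M ≤ N →
      (N.choose M : ℝ) * p ^ M * (1 - p) ^ (N - M) ≤
        (M : ℝ) ^ M / (Real.exp M * (Nat.factorial M)) + p) :
    ∑ A ∈ B.powerset, p ^ A.card * (1 - p) ^ (B.card - A.card) * φ A ≤
      𝒜.sup' h𝒜ne (fun A => (A.card : ℝ) ^ A.card /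
        (Real.exp A.card * (Nat.factorial A.card)) * φ A) + p := by
  set f : ℕ → ℝ := fun k => (k : ℝ) ^ k / (Real.exp k * k.factorial)
  set S := 𝒜.sup' h𝒜ne fun A => f A.card * φ A
  obtain ⟨A₀, hA₀⟩ := h𝒜ne
  have hS : 0 ≤ S :=
    le_sup'_of_le _ hA₀ (mul_nonneg (by positivity : 0 ≤ f #A₀) (hφ0 A₀))
  rw [← sum_subset (fun A hA => mem_powerset.2 (h𝒜B A hA)) fun A _ hA => by
    rw [hφsupp A hA, mul_zero]]
  refine sum_le_of_isAntichain_of_choose_mul_le h𝒜 h𝒜B (by positivity) fun A hA => ?_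
  calc ((#B).choose #A : ℝ) * (p ^ #A * (1 - p) ^ (#B - #A) * φ A)
      = (#B).choose #A * p ^ #A * (1 - p) ^ (#B - #A) * φ A := by ring
    _ ≤ (f #A + p) * φ A :=
        mul_le_mul_of_nonneg_right (hbin _ _ (card_le_card (h𝒜B A hA))) (hφ0 A)
    _ ≤ S + p := by
        have hpφ : p * φ A ≤ p := mul_le_of_le_one_right hp.le (hφ1 A)
        have hfS : f #A * φ A ≤ S := le_sup' (fun A => f A.card * φ A) hA
        linarith [add_mul (f #A) p (φ A)]

/-- if `𝒜` is an antichain of subsets of a finite set `B`, `φ : 2^B → [0,1]`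
vanishes outside `𝒜`, and the binomial/Poisson-type bound
`C(N,M) p^M (1-p)^{N-M} ≤ M^M/(e^M M!) + p` holds, then the expectation of `φ` at a
`p`-random subset of `B` is at most `max_{A ∈ 𝒜} (|A|^{|A|}/(e^{|A|}|A|!)) φ(A) + p`. -/
theorem antichain_expectation {α : Type*} [DecidableEq α] (B : Finset α)
    (𝒜 : Finset (Finset α)) (h𝒜ne : 𝒜.Nonempty)
    (h𝒜B : ∀ A ∈ 𝒜, A ⊆ B)
    (h𝒜 : IsAntichain (· ⊆ ·) (𝒜 : Set (Finset α)))
    (φ : Finset α → ℝ) (hφ0 : ∀ A, 0 ≤ φ A) (hφ1 : ∀ A, φ A ≤ 1)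
    (hφsupp : ∀ A, A ∉ 𝒜 → φ A = 0)
    (p : ℝ) (hp : 0 < p) (hp1 : p < 1)
    (hbin : ∀ M N : ℕ, M ≤ N →
      (N.choose M : ℝ) * p ^ M * (1 - p) ^ (N - M) ≤
        (M : ℝ) ^ M / (Real.exp M * (Nat.factorial M)) + p) :
    ∑ A ∈ B.powerset, p ^ A.card * (1 - p) ^ (B.card - A.card) * φ A ≤
      𝒜.sup' h𝒜ne (fun A => (A.card : ℝ) ^ A.card /
        (Real.exp A.card * (Nat.factorial A.card)) * φ A) + p :=
  antichain_expectation_general B 𝒜 h𝒜ne h𝒜B h𝒜 φ hφ0 hφ1 hφsupp p hp hbin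
end

section
/- Let f be a polynomial in variables x_1,…,x_s with non-negative real coefficients such that at least m of the monomials x_1,…,x_m (degree-1 terms) appear in f with strictly positive coefficient. Let ξ_1,…,ξ_s be independent Bernoulli(p) random variables with p ∈ (0,1). Then for every real ℓ, P[f(ξ_1,…,ξ_s) = ℓ] ≤ binmax(m,p), where binmax(m,p) = max over 0 ≤ m₀ ≤ m of C(m,m₀) p^{m₀}(1-p)^{m-m₀}. -/
/-!
Write `A = {i | i < m}`. Conditioning on the coordinates outside `A`, i.e. on the set `R ⊆ Aᶜ`
of those equal to `1`, the value of `f` on `T ∪ R` is strictly increasing in `T ⊆ A`, because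
adding a coordinate `i ∈ A` adds at least the positive coefficient of `x_i`. Hence each level set
`{T ⊆ A | f(1_{T ∪ R}) = ℓ}` is an antichain, and the LYM inequality
`∑_{T ∈ 𝒜} 1 / C(m, |T|) ≤ 1` bounds its `Bernoulli(p)` probability by `binmax m p`.
-/

open Finset

/-- `binmax m p` is the maximum over `0 ≤ m₀ ≤ m` of `C(m,m₀) p^{m₀} (1-p)^{m-m₀}`. -/
noncomputable def binmax (m : ℕ) (p : ℝ) : ℝ :=
  (Finset.range (m + 1)).sup' ⟨0, Finset.mem_range.2 (Nat.succ_pos m)⟩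
    (fun m₀ => (m.choose m₀ : ℝ) * p ^ m₀ * (1 - p) ^ (m - m₀))

section Binmax

variable {m k : ℕ} {p : ℝ}

lemma le_binmax (hk : k ≤ m) : (m.choose k : ℝ) * p ^ k * (1 - p) ^ (m - k) ≤ binmax m p :=
  Finset.le_sup' (fun k => (m.choose k : ℝ) * p ^ k * (1 - p) ^ (m - k))
    (Finset.mem_range_succ_iff.2 hk)

lemma binmax_nonneg (hp : p ≤ 1) : 0 ≤ binmax m p :=
  (pow_nonneg (sub_nonneg.2 hp) m).trans (by simpa using le_binmax (p := p) (Nat.zero_le m))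

end Binmax

section BernoulliWeight

variable {α : Type*} (p : ℝ)

/-- The probability that a `p`-random subset of `U` is exactly `T`. -/
def bernoulliWeight (U T : Finset α) : ℝ := p ^ #T * (1 - p) ^ (#U - #T)

variable {p}

lemma bernoulliWeight_nonneg (hp₀ : 0 ≤ p) (hp₁ : p ≤ 1) (U T : Finset α) :
    0 ≤ bernoulliWeight p U T := by
  have := sub_nonneg.2 hp₁
  unfold bernoulliWeight; positivity

lemma sum_bernoulliWeight (U : Finset α) : ∑ T ∈ U.powerset, bernoulliWeight p U T = 1 := by
  simp [bernoulliWeight, sum_pow_mul_eq_add_pow]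

lemma bernoulliWeight_union [DecidableEq α] {A B T R : Finset α} (hAB : Disjoint A B)
    (hT : T ⊆ A) (hR : R ⊆ B) :
    bernoulliWeight p (A ∪ B) (T ∪ R) = bernoulliWeight p A T * bernoulliWeight p B R := by
  have hTR : #(T ∪ R) = #T + #R := card_union_of_disjoint (hAB.mono hT hR)
  have hexp : #(A ∪ B) - #(T ∪ R) = (#A - #T) + (#B - #R) := by
    have := card_le_card hT; have := card_le_card hR
    rw [card_union_of_disjoint hAB, hTR]; omega
  rw [bernoulliWeight, bernoulliWeight, bernoulliWeight, hexp, hTR, pow_add, pow_add]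
  ring

lemma sum_bernoulliWeight_le_binmax_of_isAntichain [Fintype α] {𝒜 : Finset (Finset α)}
    (hp₁ : p ≤ 1) (h𝒜 : IsAntichain (· ⊆ ·) (𝒜 : Set (Finset α))) :
    ∑ T ∈ 𝒜, bernoulliWeight p univ T ≤ binmax (Fintype.card α) p := by
  set n := Fintype.card α with hn
  calc ∑ T ∈ 𝒜, bernoulliWeight p univ T
      = ∑ T ∈ 𝒜, (n.choose #T : ℝ)⁻¹ * (n.choose #T * p ^ #T * (1 - p) ^ (n - #T)) := by
        refine sum_congr rfl fun T _ => ?_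
        have : (n.choose #T : ℝ) ≠ 0 := by exact_mod_cast (Nat.choose_pos (card_le_univ T)).ne'
        rw [bernoulliWeight, card_univ, ← hn]
        field_simp
    _ ≤ ∑ T ∈ 𝒜, (n.choose #T : ℝ)⁻¹ * binmax n p :=
        sum_le_sum fun T _ => mul_le_mul_of_nonneg_left (le_binmax (card_le_univ T)) (by positivity)
    _ = (∑ T ∈ 𝒜, (n.choose #T : ℝ)⁻¹) * binmax n p := (sum_mul ..).symm
    _ ≤ binmax n p :=
        mul_le_of_le_one_left (binmax_nonneg hp₁)
          (lubell_yamamoto_meshalkin_inequality_sum_inv_choose h𝒜)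

lemma sum_bernoulliWeight_le_binmax_of_isAntichain_of_subset {A : Finset α}
    {𝒜 : Finset (Finset α)} (hp₁ : p ≤ 1) (h𝒜A : ∀ T ∈ 𝒜, T ⊆ A)
    (h𝒜 : IsAntichain (· ⊆ ·) (𝒜 : Set (Finset α))) :
    ∑ T ∈ 𝒜, bernoulliWeight p A T ≤ binmax #A p := by
  classical
  have hmap : ∀ T ∈ 𝒜, (T.subtype (· ∈ A)).map (Function.Embedding.subtype _) = T :=
    fun T hT => subtype_map_of_mem fun _ hx => h𝒜A T hT hx
  have hinj : Set.InjOn (Finset.subtype (· ∈ A)) 𝒜 := fun T hT T' hT' h => by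
    rw [← hmap T hT, ← hmap T' hT', h]
  have hcard : ∀ T ∈ 𝒜, #(T.subtype (· ∈ A)) = #T := fun T hT => by
    rw [← card_map (Function.Embedding.subtype _), hmap T hT]
  have h𝒜' : IsAntichain (· ⊆ ·) ((𝒜.image (Finset.subtype (· ∈ A)) : Finset (Finset A)) :
      Set (Finset A)) := by
    rintro _ hX _ hY hXY hsub
    obtain ⟨T, hT, rfl⟩ := mem_image.1 hX
    obtain ⟨T', hT', rfl⟩ := mem_image.1 hY
    refine h𝒜 hT hT' (fun h => hXY (h ▸ rfl)) ?_
    rw [← hmap T hT, ← hmap T' hT']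
    exact map_subset_map.2 hsub
  calc ∑ T ∈ 𝒜, bernoulliWeight p A T
      = ∑ X ∈ 𝒜.image (Finset.subtype (· ∈ A)), bernoulliWeight p univ X := by
        rw [sum_image hinj]
        refine sum_congr rfl fun T hT => ?_
        simp only [bernoulliWeight, hcard T hT, card_univ, Fintype.card_coe]
    _ ≤ binmax #A p := by
        simpa using sum_bernoulliWeight_le_binmax_of_isAntichain hp₁ h𝒜'

end BernoulliWeight

lemma sum_powerset_union_of_disjoint {α M : Type*} [DecidableEq α] [AddCommMonoid M]
    {A B : Finset α} (hAB : Disjoint A B) (φ : Finset α → M) :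
    ∑ S ∈ (A ∪ B).powerset, φ S = ∑ R ∈ B.powerset, ∑ T ∈ A.powerset, φ (T ∪ R) := by
  induction B using Finset.induction_on generalizing φ with
  | empty => simp
  | insert b B hb ih =>
    have hbA : b ∉ A := disjoint_right.1 hAB (mem_insert_self b B)
    have hAB' := disjoint_of_subset_right (subset_insert b B) hAB
    rw [union_insert, sum_powerset_insert (by simp [hb, hbA]), sum_powerset_insert hb,
      ih hAB', ih hAB']
    simp only [union_insert]

lemma sum_bernoulliWeight_filter_le_binmax {α : Type*} [DecidableEq α] {p : ℝ} {A B : Finset α}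
    (hAB : Disjoint A B) (hp₀ : 0 ≤ p) (hp₁ : p ≤ 1) (P : Finset α → Prop) [DecidablePred P]
    (hP : ∀ R ⊆ B, IsAntichain (· ⊆ ·) {T | T ⊆ A ∧ P (T ∪ R)}) :
    ∑ S ∈ (A ∪ B).powerset with P S, bernoulliWeight p (A ∪ B) S ≤ binmax #A p := by
  have hfiber : ∀ R ∈ B.powerset,
      ∑ T ∈ A.powerset with P (T ∪ R), bernoulliWeight p A T ≤ binmax #A p := fun R hR =>
    sum_bernoulliWeight_le_binmax_of_isAntichain_of_subset hp₁
      (fun T hT => mem_powerset.1 (mem_filter.1 hT).1)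
      ((hP R (mem_powerset.1 hR)).subset fun T hT => by simpa using hT)
  calc ∑ S ∈ (A ∪ B).powerset with P S, bernoulliWeight p (A ∪ B) S
      = ∑ R ∈ B.powerset, bernoulliWeight p B R *
          ∑ T ∈ A.powerset with P (T ∪ R), bernoulliWeight p A T := by
        rw [sum_filter, sum_powerset_union_of_disjoint hAB]
        refine sum_congr rfl fun R hR => ?_
        rw [sum_filter, mul_sum]
        refine sum_congr rfl fun T hT => ?_
        rw [bernoulliWeight_union hAB (mem_powerset.1 hT) (mem_powerset.1 hR)]
        split_ifs <;> ring
    _ ≤ ∑ R ∈ B.powerset, bernoulliWeight p B R * binmax #A p :=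
        sum_le_sum fun R hR =>
          mul_le_mul_of_nonneg_left (hfiber R hR) (bernoulliWeight_nonneg hp₀ hp₁ B R)
    _ = binmax #A p := by rw [← sum_mul, sum_bernoulliWeight, one_mul]

section MvPolynomial

variable {σ R : Type*} [CommSemiring R] [PartialOrder R] [IsStrictOrderedRing R]
  {f : MvPolynomial σ R}

lemma MvPolynomial.eval_lt_eval_of_coeff_single_pos (hf : ∀ d, 0 ≤ f.coeff d) {x y : σ → R}
    (hx : 0 ≤ x) (hxy : x ≤ y) {i : σ} (hi : 0 < f.coeff (Finsupp.single i 1))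
    (hxyi : x i < y i) : eval x f < eval y f := by
  rw [eval_eq, eval_eq]
  refine sum_lt_sum (fun d _ => mul_le_mul_of_nonneg_left ?_ (hf d))
    ⟨_, mem_support_iff.2 hi.ne', ?_⟩
  · exact prod_le_prod (fun j _ => pow_nonneg (hx j) _) fun j _ => pow_le_pow_left₀ (hx j) (hxy j) _
  · simpa using mul_lt_mul_of_pos_left hxyi hi

lemma MvPolynomial.eval_indicator_lt_of_subset [DecidableEq σ] (hf : ∀ d, 0 ≤ f.coeff d)
    {S S' : Finset σ} (hSS' : S ⊆ S') {i : σ} (hi : 0 < f.coeff (Finsupp.single i 1))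
    (hiS' : i ∈ S') (hiS : i ∉ S) :
    eval (fun j => if j ∈ S then (1 : R) else 0) f < eval (fun j => if j ∈ S' then 1 else 0) f := by
  refine eval_lt_eval_of_coeff_single_pos hf (fun j => ?_) (fun j => ?_) hi (by simp [hiS, hiS'])
  · dsimp only; split_ifs <;> simp
  · dsimp only; split_ifs with h h' <;> first | exact absurd (hSS' h) h' | simp

end MvPolynomial

/-- for a polynomial `f` in `s` variables with non-negative coefficients in which
each of the monomials `x₁, …, x_m` appears with strictly positive coefficient, the probability
that `f` of independent Bernoulli(p) variables equals any given `ℓ` is at most `binmax(m,p)`. -/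
theorem large_linear_part (s m : ℕ) (hms : m ≤ s) (f : MvPolynomial (Fin s) ℝ)
    (hcoeff : ∀ d, 0 ≤ f.coeff d)
    (hlin : ∀ i : Fin s, (i : ℕ) < m → 0 < f.coeff (Finsupp.single i 1))
    (p : ℝ) (hp : 0 < p) (hp1 : p < 1) (ℓ : ℝ) :
    ∑ S ∈ (Finset.univ : Finset (Fin s)).powerset,
      p ^ S.card * (1 - p) ^ (s - S.card) *
        (if MvPolynomial.eval (fun i => if i ∈ S then (1 : ℝ) else 0) f = ℓ then 1 else 0) ≤
      binmax m p := by
  classical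
  set A : Finset (Fin s) := {i | (i : ℕ) < m}
  have hA : #A = m := by simpa [A, Fin.card_filter_val_lt] using hms
  have hlevel : ∀ R ⊆ Aᶜ, IsAntichain (· ⊆ ·)
      {T | T ⊆ A ∧ MvPolynomial.eval (fun i => if i ∈ T ∪ R then (1 : ℝ) else 0) f = ℓ} := by
    rintro R hR T ⟨-, hT⟩ T' ⟨hT'A, hT'⟩ hne hsub
    obtain ⟨j, hjT', hjT⟩ := exists_of_ssubset (ssubset_of_subset_of_ne hsub hne)
    have hjA := hT'A hjT'
    refine (MvPolynomial.eval_indicator_lt_of_subset hcoeff (union_subset_union_left hsub)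
      (hlin j (mem_filter.1 hjA).2) (mem_union_left R hjT') ?_).ne (hT.trans hT'.symm)
    exact fun h => (mem_union.1 h).elim hjT fun hjR => mem_compl.1 (hR hjR) hjA
  have key := sum_bernoulliWeight_filter_le_binmax disjoint_compl_right hp.le hp1.le
    (fun S => MvPolynomial.eval (fun i => if i ∈ S then (1 : ℝ) else 0) f = ℓ) hlevel
  rw [union_compl, hA] at key
  refine (le_of_eq ?_).trans key
  rw [sum_filter]
  refine sum_congr rfl fun S _ => ?_
  simp [bernoulliWeight]
end

section
/- Let p = 0.388 and let ξ_1,…,ξ_s be independent Bernoulli(p) random variables. Then for any nonzero real numbers ℓ₁, ℓ₂, P[ξ_1 + ⋯ + ξ_s ∈ {ℓ₁, ℓ₂}] < 0.713. -/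
/-!
The sum is `P[X ∈ K]` for `X ~ Bin(s, 0.388)` and a set `K ⊆ {1, …, s}` of at most two values,
so it is at most the sum of two binomial weights. By Pascal's rule each row of binomial weights
is a convex combination of the previous row, so the largest weight in row `s` does not increase
with `s`; for `s ≥ 4` every weight is at most the largest one of row `4`, about `0.3558`. For
`s ≤ 3` the two largest weights of positive values are compared directly (for `s = 3` they add
up to about `0.7124`).
-/

open Finset

noncomputable def binomialWeight (p : ℝ) (n k : ℕ) : ℝ :=
  n.choose k * p ^ k * (1 - p) ^ (n - k)

namespace binomialWeight

variable {p : ℝ}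

lemma nonneg (hp₀ : 0 ≤ p) (hp₁ : p ≤ 1) (n k : ℕ) : 0 ≤ binomialWeight p n k := by
  unfold binomialWeight
  have : 0 ≤ 1 - p := by linarith
  positivity

lemma succ_zero (n : ℕ) : binomialWeight p (n + 1) 0 = (1 - p) * binomialWeight p n 0 := by
  simp only [binomialWeight, Nat.choose_zero_right, Nat.sub_zero, pow_succ]
  ring

lemma succ_succ (n k : ℕ) :
    binomialWeight p (n + 1) (k + 1) =
      (1 - p) * binomialWeight p n (k + 1) + p * binomialWeight p n k := by
  simp only [binomialWeight, Nat.choose_succ_succ, Nat.cast_add, Nat.add_sub_add_right]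
  rcases le_or_gt (k + 1) n with h | h
  · rw [show n - k = n - (k + 1) + 1 by omega, pow_succ]
    ring
  · rw [Nat.choose_eq_zero_of_lt h]
    ring

lemma le_of_forall_le_of_le (hp₀ : 0 ≤ p) (hp₁ : p ≤ 1) {n m : ℕ} (hnm : n ≤ m) {M : ℝ}
    (h : ∀ k, binomialWeight p n k ≤ M) (k : ℕ) : binomialWeight p m k ≤ M := by
  induction m, hnm using Nat.le_induction generalizing k with
  | base => exact h k
  | succ m _ ih =>
    cases k with
    | zero =>
      rw [succ_zero]
      nlinarith [ih 0, nonneg hp₀ hp₁ m 0]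
    | succ k =>
      rw [succ_succ]
      nlinarith [ih k, ih (k + 1)]

end binomialWeight

lemma sum_powerset_univ_eq_sum_binomialWeight (p : ℝ) (s : ℕ) (g : ℕ → ℝ) :
    ∑ S ∈ (univ : Finset (Fin s)).powerset, p ^ #S * (1 - p) ^ (s - #S) * g #S =
      ∑ k ∈ range (s + 1), binomialWeight p s k * g k := by
  rw [sum_powerset_apply_card (fun k => p ^ k * (1 - p) ^ (s - k) * g k)]
  simp only [card_univ, Fintype.card_fin, nsmul_eq_mul, binomialWeight, mul_assoc]

lemma sum_le_add_of_card_le_two {α : Type*} {K : Finset α} (hK : #K ≤ 2) {f : α → ℝ}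
    {t : α} {M₁ M₂ : ℝ} (hM₁ : 0 ≤ M₁) (hM₂ : 0 ≤ M₂) (hf : ∀ k ∈ K, f k ≤ M₁)
    (hf' : ∀ k ∈ K, k ≠ t → f k ≤ M₂) : ∑ k ∈ K, f k ≤ M₁ + M₂ := by
  classical
  interval_cases h : #K
  · simp [card_eq_zero.mp h, add_nonneg hM₁ hM₂]
  · obtain ⟨a, rfl⟩ := card_eq_one.mp h
    simpa using (hf a (mem_singleton_self a)).trans (le_add_of_nonneg_right hM₂)
  · obtain ⟨a, b, hab, rfl⟩ := card_eq_two.mp h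
    rw [sum_pair hab]
    by_cases ha : a = t
    · have hb : b ≠ t := ha ▸ hab.symm
      linarith [hf a (by simp), hf' b (by simp) hb]
    · linarith [hf' a (by simp) ha, hf b (by simp)]

lemma binomialWeight_le_of_four_le {s : ℕ} (hs : 4 ≤ s) (k : ℕ) :
    binomialWeight 0.388 s k ≤ 0.3558 := by
  refine binomialWeight.le_of_forall_le_of_le (by norm_num) (by norm_num) hs (fun k => ?_) k
  rcases le_or_gt k 4 with hk | hk
  · interval_cases k <;> norm_num [binomialWeight, Nat.choose]
  · norm_num [binomialWeight, Nat.choose_eq_zero_of_lt hk]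

lemma sum_binomialWeight_lt_of_card_le_two {s : ℕ} {K : Finset ℕ} (hK : K ⊆ Icc 1 s)
    (hcard : #K ≤ 2) : ∑ k ∈ K, binomialWeight 0.388 s k < 0.713 := by
  rcases le_or_gt 4 s with hs | hs
  · have hsum := sum_le_card_nsmul K _ _ fun k _ => binomialWeight_le_of_four_le hs k
    rw [nsmul_eq_mul] at hsum
    have : (#K : ℝ) ≤ 2 := by exact_mod_cast hcard
    nlinarith
  · obtain ⟨M₁, M₂, hM₁, hM₂, hsum, hle⟩ : ∃ M₁ M₂ : ℝ, 0 ≤ M₁ ∧ 0 ≤ M₂ ∧ M₁ + M₂ < 0.713 ∧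
        ∀ k ∈ K, binomialWeight 0.388 s k ≤ M₁ ∧ (k ≠ 1 → binomialWeight 0.388 s k ≤ M₂) := by
      rcases (by omega : s = 3 ∨ s ≤ 2) with rfl | hs
      · refine ⟨0.436, 0.2765, by norm_num, by norm_num, by norm_num, fun k hk => ?_⟩
        obtain ⟨hk₁, hks⟩ := mem_Icc.mp (hK hk)
        interval_cases k <;> norm_num [binomialWeight]
      · refine ⟨0.475, 0.151, by norm_num, by norm_num, by norm_num, fun k hk => ?_⟩
        obtain ⟨hk₁, hks⟩ := mem_Icc.mp (hK hk)
        interval_cases s <;> interval_cases k <;> norm_num [binomialWeight]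
    have := sum_le_add_of_card_le_two hcard hM₁ hM₂ (fun k hk => (hle k hk).1)
      (fun k hk => (hle k hk).2)
    linarith

/-- for `p = 0.388` and independent Bernoulli(p) variables `ξ₁, …, ξ_s`, and any
nonzero reals `ℓ₁, ℓ₂`, we have `P[ξ₁ + ⋯ + ξ_s ∈ {ℓ₁, ℓ₂}] < 0.713`. -/
theorem two_layers (s : ℕ) (ℓ₁ ℓ₂ : ℝ) (h₁ : ℓ₁ ≠ 0) (h₂ : ℓ₂ ≠ 0) :
    ∑ S ∈ (Finset.univ : Finset (Fin s)).powerset,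
      (0.388 : ℝ) ^ S.card * (1 - 0.388) ^ (s - S.card) *
        (if (S.card : ℝ) = ℓ₁ ∨ (S.card : ℝ) = ℓ₂ then 1 else 0) < 0.713 := by
  set K := (range (s + 1)).filter fun k : ℕ => (k : ℝ) = ℓ₁ ∨ (k : ℝ) = ℓ₂
  have hK : K ⊆ Icc 1 s := by
    intro k hk
    obtain ⟨hks, hkℓ⟩ := mem_filter.mp hk
    have hk₀ : k ≠ 0 := by rintro rfl; rcases hkℓ with h | h <;> simp_all [eq_comm]
    exact mem_Icc.mpr ⟨Nat.one_le_iff_ne_zero.mpr hk₀, Nat.lt_succ_iff.mp (mem_range.mp hks)⟩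
  have hcard : #K ≤ 2 :=
    (card_le_card_of_injOn (fun k : ℕ => (k : ℝ)) (t := {ℓ₁, ℓ₂})
      (fun k hk => by simpa using (mem_filter.mp hk).2)
      (fun _ _ _ _ h => Nat.cast_injective h)).trans card_le_two
  rw [sum_powerset_univ_eq_sum_binomialWeight 0.388 s
    fun k => if (k : ℝ) = ℓ₁ ∨ (k : ℝ) = ℓ₂ then 1 else 0]
  simp only [mul_ite, mul_one, mul_zero, ← sum_filter]
  exact sum_binomialWeight_lt_of_card_le_two hK hcard
end

section
/- For every probability p ∈ (0,1) and integers 0 ≤ M ≤ N, C(N,M) p^M (1-p)^{N-M} ≤ M^M/(e^M M!) + p, where for M = 0 we interpret M^M/(e^M M!) = 1. -/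
/-!
Stein–Chen method at the single point `M`. With `r = N p`, the function
`f = poissonSteinSol r M` solves `r f (k + 1) - k f k = 1{k = M} - Po_r(M)`, so
`P[W = M] - Po_r(M) = E[r f (W + 1) - W f W]` for `W ~ Bin(N, p)`. Writing `W = W' + ξ` with
`W' ~ Bin(N - 1, p)` and an independent Bernoulli `ξ` turns this into
`r p E[f (W' + 2) - f (W' + 1)]`. The increments of `f` are `≤ 0` except at `M`, where the
increment is at most `1 / r`; hence `P[W = M] ≤ Po_r(M) + p`. Finally `r ↦ Po_r(M)` is maximal
at `r = M`.
-/

open Finset Real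
open scoped Nat

noncomputable def poissonProb (r : ℝ) (k : ℕ) : ℝ := exp (-r) * r ^ k / k !

noncomputable def poissonCDF (r : ℝ) (k : ℕ) : ℝ := ∑ j ∈ range (k + 1), poissonProb r j

section Poisson

variable {r : ℝ}

lemma poissonProb_pos (hr : 0 < r) (k : ℕ) : 0 < poissonProb r k := by
  unfold poissonProb; positivity

lemma poissonProb_nonneg (hr : 0 ≤ r) (k : ℕ) : 0 ≤ poissonProb r k := by
  unfold poissonProb; positivity

lemma succ_mul_poissonProb_succ (r : ℝ) (k : ℕ) :
    (k + 1) * poissonProb r (k + 1) = r * poissonProb r k := by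
  unfold poissonProb
  rw [Nat.factorial_succ, pow_succ]
  push_cast
  field_simp

lemma hasSum_poissonProb (r : ℝ) : HasSum (poissonProb r) 1 := by
  have h := (NormedSpace.expSeries_div_hasSum_exp r).mul_left (exp (-r))
  rw [← exp_eq_exp_ℝ, ← exp_add, neg_add_cancel, exp_zero] at h
  simp_rw [← mul_div_assoc] at h
  exact h

lemma one_sub_poissonCDF (r : ℝ) (k : ℕ) :
    1 - poissonCDF r k = ∑' j, poissonProb r (j + (k + 1)) := by
  rw [← (hasSum_poissonProb r).tsum_eq,
    ← (hasSum_poissonProb r).summable.sum_add_tsum_nat_add (k + 1), poissonCDF,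
    add_sub_cancel_left]

lemma mul_poissonCDF_le (hr : 0 ≤ r) (k : ℕ) :
    r * poissonCDF r k ≤ (k + 1) * poissonCDF r (k + 1) := by
  unfold poissonCDF
  calc r * ∑ j ∈ range (k + 1), poissonProb r j
      = ∑ j ∈ range (k + 1), (j + 1) * poissonProb r (j + 1) := by
        rw [mul_sum]; exact sum_congr rfl fun j _ ↦ (succ_mul_poissonProb_succ r j).symm
    _ ≤ ∑ j ∈ range (k + 1), (k + 1) * poissonProb r (j + 1) := by
        gcongr with j hj
        · exact poissonProb_nonneg hr _
        · exact_mod_cast Nat.lt_succ_iff.mp (mem_range.mp hj)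
    _ ≤ (k + 1) * ∑ j ∈ range (k + 2), poissonProb r j := by
        rw [← mul_sum, sum_range_succ' _ (k + 1)]
        gcongr
        exact le_add_of_nonneg_right (poissonProb_nonneg hr 0)

lemma succ_mul_one_sub_poissonCDF_succ_le (hr : 0 ≤ r) (k : ℕ) :
    (k + 1) * (1 - poissonCDF r (k + 1)) ≤ r * (1 - poissonCDF r k) := by
  have hs : ∀ i, Summable fun j ↦ poissonProb r (j + i) := fun i ↦
    (summable_nat_add_iff i).mpr (hasSum_poissonProb r).summable
  rw [one_sub_poissonCDF, one_sub_poissonCDF, ← tsum_mul_left, ← tsum_mul_left]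
  refine ((hs _).mul_left _).tsum_le_tsum (fun j ↦ ?_) ((hs _).mul_left _)
  rw [show j + (k + 1) = j + k + 1 by ring, show j + (k + 1 + 1) = j + k + 1 + 1 by ring,
    ← succ_mul_poissonProb_succ]
  gcongr
  · exact poissonProb_nonneg hr _
  · linarith [(j.cast_nonneg : (0 : ℝ) ≤ j)]

lemma poissonCDF_div_poissonProb_le (hr : 0 < r) (k : ℕ) :
    poissonCDF r k / poissonProb r k ≤ poissonCDF r (k + 1) / poissonProb r (k + 1) := by
  rw [div_le_div_iff₀ (poissonProb_pos hr k) (poissonProb_pos hr (k + 1))]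
  refine le_of_mul_le_mul_left ?_ (by positivity : (0 : ℝ) < k + 1)
  calc (k + 1) * (poissonCDF r k * poissonProb r (k + 1))
      = poissonProb r k * (r * poissonCDF r k) := by
        linear_combination poissonCDF r k * succ_mul_poissonProb_succ r k
    _ ≤ poissonProb r k * ((k + 1) * poissonCDF r (k + 1)) :=
        mul_le_mul_of_nonneg_left (mul_poissonCDF_le hr.le k) (poissonProb_nonneg hr.le k)
    _ = (k + 1) * (poissonCDF r (k + 1) * poissonProb r k) := by ring

lemma one_sub_poissonCDF_div_poissonProb_le (hr : 0 < r) (k : ℕ) :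
    (1 - poissonCDF r (k + 1)) / poissonProb r (k + 1) ≤
      (1 - poissonCDF r k) / poissonProb r k := by
  rw [div_le_div_iff₀ (poissonProb_pos hr (k + 1)) (poissonProb_pos hr k)]
  refine le_of_mul_le_mul_left ?_ (by positivity : (0 : ℝ) < k + 1)
  calc (k + 1) * ((1 - poissonCDF r (k + 1)) * poissonProb r k)
      = poissonProb r k * ((k + 1) * (1 - poissonCDF r (k + 1))) := by ring
    _ ≤ poissonProb r k * (r * (1 - poissonCDF r k)) :=
        mul_le_mul_of_nonneg_left (succ_mul_one_sub_poissonCDF_succ_le hr.le k)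
          (poissonProb_nonneg hr.le k)
    _ = (k + 1) * ((1 - poissonCDF r k) * poissonProb r (k + 1)) := by
        linear_combination (poissonCDF r k - 1) * succ_mul_poissonProb_succ r k

lemma poissonProb_le_poissonProb_self (hr : 0 ≤ r) (M : ℕ) :
    poissonProb r M ≤ poissonProb M M := by
  rcases M.eq_zero_or_pos with rfl | hM
  · simpa [poissonProb] using hr
  have hM' : (0 : ℝ) < M := by exact_mod_cast hM
  have key : (r / M) ^ M ≤ exp (r - M) := by
    calc (r / M) ^ M ≤ exp (r / M - 1) ^ M := by
          gcongr; linarith [add_one_le_exp (r / M - 1)]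
      _ = exp (r - M) := by rw [← exp_nat_mul]; congr 1; field_simp
  refine div_le_div_of_nonneg_right ?_ (Nat.cast_nonneg _)
  calc exp (-r) * r ^ M = exp (-r) * ((r / M) ^ M * M ^ M) := by
        rw [div_pow, div_mul_cancel₀ _ (by positivity)]
    _ ≤ exp (-r) * (exp (r - M) * M ^ M) := by gcongr
    _ = exp (-M) * M ^ M := by rw [← mul_assoc, ← exp_add]; ring_nf

end Poisson

-- The classical Stein–Chen solution for the indicator of `{M}`; its value at `0` is arbitrary.
noncomputable def poissonSteinSol (r : ℝ) (M : ℕ) : ℕ → ℝ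
  | 0 => 0
  | k + 1 =>
    poissonProb r M / r * (((if M ≤ k then 1 else 0) - poissonCDF r k) / poissonProb r k)

section Stein

variable {r : ℝ}

lemma poissonSteinSol_spec (hr : 0 < r) (M k : ℕ) :
    r * poissonSteinSol r M (k + 1) - k * poissonSteinSol r M k =
      (if k = M then 1 else 0) - poissonProb r M := by
  have hπ := poissonProb_pos hr
  have hscale :
      poissonProb r M * ((if k = M then 1 else 0) - poissonProb r k) / poissonProb r k =
        (if k = M then 1 else 0) - poissonProb r M := by
    split_ifs with h
    · subst h; field_simp [(hπ k).ne']
    · rw [zero_sub, zero_sub, mul_neg, neg_div, mul_div_cancel_right₀ _ (hπ k).ne']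
  rw [← hscale]
  cases k with
  | zero =>
    simp only [poissonSteinSol, poissonCDF, zero_add, sum_range_one, Nat.le_zero,
      CharP.cast_eq_zero, zero_mul, sub_zero, eq_comm (a := 0)]
    field_simp
  | succ j =>
    have hstep : ((if M ≤ j + 1 then 1 else 0) - poissonCDF r (j + 1)) -
        ((if M ≤ j then 1 else 0) - poissonCDF r j) =
        (if j + 1 = M then 1 else 0) - poissonProb r (j + 1) := by
      rw [poissonCDF, sum_range_succ, ← poissonCDF]
      split_ifs <;> first | omega | ring
    have h := succ_mul_poissonProb_succ r j
    rw [← hstep]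
    simp only [poissonSteinSol]
    have hj := (hπ j).ne'
    have hj' := (hπ (j + 1)).ne'
    push_cast
    field_simp
    linear_combination (-(poissonProb r M * ((if M ≤ j then 1 else 0) - poissonCDF r j))) * h

lemma poissonSteinSol_succ_succ_sub_le (hr : 0 < r) (M k : ℕ) :
    poissonSteinSol r M (k + 2) - poissonSteinSol r M (k + 1) ≤
      if k + 1 = M then r⁻¹ else 0 := by
  have hc : 0 ≤ poissonProb r M / r := div_nonneg (poissonProb_nonneg hr.le M) hr.le
  have hcdf := poissonCDF_div_poissonProb_le hr k
  simp only [poissonSteinSol]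
  rcases lt_trichotomy (k + 1) M with h | rfl | h
  · rw [if_neg h.ne, if_neg (by omega), if_neg (by omega), sub_nonpos, zero_sub, zero_sub,
      neg_div, neg_div]
    exact mul_le_mul_of_nonneg_left (neg_le_neg hcdf) hc
  · have hπ := (poissonProb_pos hr (k + 1)).ne'
    rw [if_pos rfl, if_pos le_rfl, if_neg (by omega), zero_sub, neg_div, mul_neg, sub_neg_eq_add]
    calc _ ≤ poissonProb r (k + 1) / r * ((1 - poissonCDF r (k + 1)) / poissonProb r (k + 1)) +
          poissonProb r (k + 1) / r * (poissonCDF r (k + 1) / poissonProb r (k + 1)) := by gcongr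
      _ = r⁻¹ := by field_simp; ring
  · rw [if_neg h.ne', if_pos (by omega), if_pos (by omega), sub_nonpos]
    exact mul_le_mul_of_nonneg_left (one_sub_poissonCDF_div_poissonProb_le hr k) hc

end Stein

noncomputable def binomProb (n : ℕ) (p : ℝ) (k : ℕ) : ℝ :=
  n.choose k * p ^ k * (1 - p) ^ (n - k)

section Binomial

variable {p : ℝ}

lemma binomProb_nonneg (hp0 : 0 ≤ p) (hp1 : p ≤ 1) (n k : ℕ) : 0 ≤ binomProb n p k := by
  unfold binomProb
  have : 0 ≤ 1 - p := sub_nonneg.mpr hp1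
  positivity

lemma sum_binomProb (n : ℕ) (p : ℝ) : ∑ k ∈ range (n + 1), binomProb n p k = 1 := by
  rw [← one_pow (M := ℝ) n, ← add_sub_cancel p 1, add_pow]
  exact sum_congr rfl fun k _ ↦ by rw [binomProb]; ring

lemma binomProb_eq_zero_of_lt {n k : ℕ} (h : n < k) (p : ℝ) : binomProb n p k = 0 := by
  simp [binomProb, Nat.choose_eq_zero_of_lt h]

lemma binomProb_succ_zero (n : ℕ) (p : ℝ) :
    binomProb (n + 1) p 0 = (1 - p) * binomProb n p 0 := by
  simp [binomProb, pow_succ]; ring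

lemma binomProb_succ_succ (n : ℕ) (p : ℝ) (k : ℕ) :
    binomProb (n + 1) p (k + 1) = (1 - p) * binomProb n p (k + 1) + p * binomProb n p k := by
  rcases lt_or_ge n k with h | h
  · simp [binomProb, Nat.choose_eq_zero_of_lt, h, Nat.lt_succ_of_lt h]
  obtain ⟨m, rfl⟩ := Nat.exists_eq_add_of_le h
  simp only [binomProb, Nat.choose_succ_succ, Nat.add_sub_add_right, show k + m - k = m by omega]
  cases m with
  | zero => simp [pow_succ']
  | succ m => rw [show k + (m + 1) - (k + 1) = m by omega, pow_succ' (1 - p) m]; push_cast; ring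

lemma succ_mul_binomProb_succ (n : ℕ) (p : ℝ) (k : ℕ) :
    (k + 1) * binomProb (n + 1) p (k + 1) = (n + 1) * p * binomProb n p k := by
  have h : ((n + 1 : ℕ) : ℝ) * n.choose k = (n + 1).choose (k + 1) * (k + 1 : ℕ) := by
    exact_mod_cast Nat.add_one_mul_choose_eq n k
  simp only [binomProb, Nat.add_sub_add_right, pow_succ]
  push_cast at h
  linear_combination (-(p ^ k * p * (1 - p) ^ (n - k))) * h

lemma sum_binomProb_succ_mul (n : ℕ) (p : ℝ) (g : ℕ → ℝ) :
    ∑ k ∈ range (n + 2), binomProb (n + 1) p k * g k =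
      ∑ k ∈ range (n + 1), binomProb n p k * ((1 - p) * g k + p * g (k + 1)) := by
  have h := sum_range_succ' (fun k ↦ binomProb n p k * g k) (n + 1)
  rw [sum_range_succ, binomProb_eq_zero_of_lt n.lt_succ_self, zero_mul, add_zero] at h
  rw [sum_range_succ', binomProb_succ_zero]
  simp only [binomProb_succ_succ, mul_add, add_mul, sum_add_distrib, mul_assoc,
    mul_left_comm (binomProb _ _ _), ← mul_sum]
  linear_combination (p - 1) * h

lemma sum_mul_binomProb_succ_mul (n : ℕ) (p : ℝ) (g : ℕ → ℝ) :
    ∑ k ∈ range (n + 2), k * binomProb (n + 1) p k * g k =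
      (n + 1) * p * ∑ k ∈ range (n + 1), binomProb n p k * g (k + 1) := by
  rw [sum_range_succ', mul_sum]
  simp only [Nat.cast_zero, zero_mul, add_zero, Nat.cast_succ, succ_mul_binomProb_succ, mul_assoc]

lemma sum_binomProb_mul_stein (n : ℕ) (p : ℝ) (f : ℕ → ℝ) :
    ∑ k ∈ range (n + 2), binomProb (n + 1) p k * ((n + 1) * p * f (k + 1) - k * f k) =
      (n + 1) * p * p * ∑ k ∈ range (n + 1), binomProb n p k * (f (k + 2) - f (k + 1)) := by
  calc _ = (n + 1) * p * ∑ k ∈ range (n + 2), binomProb (n + 1) p k * f (k + 1) -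
        ∑ k ∈ range (n + 2), k * binomProb (n + 1) p k * f k := by
        rw [mul_sum, ← sum_sub_distrib]
        exact sum_congr rfl fun k _ ↦ by ring
    _ = (n + 1) * p *
          ∑ k ∈ range (n + 1), binomProb n p k * ((1 - p) * f (k + 1) + p * f (k + 2)) -
        (n + 1) * p * ∑ k ∈ range (n + 1), binomProb n p k * f (k + 1) := by
        rw [sum_binomProb_succ_mul, sum_mul_binomProb_succ_mul]
    _ = _ := by
        rw [← mul_sub, ← sum_sub_distrib, mul_sum, mul_sum]
        exact sum_congr rfl fun k _ ↦ by ring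

end Binomial

theorem binomProb_le_poissonProb_add {p : ℝ} (hp0 : 0 < p) (hp1 : p ≤ 1) (N M : ℕ) :
    binomProb N p M ≤ poissonProb (N * p) M + p := by
  rcases N with _ | n
  · rcases M with _ | M <;> simp [binomProb, poissonProb, hp0.le]
  push_cast
  set r : ℝ := (n + 1) * p
  set f := poissonSteinSol r M
  have hr : 0 < r := by positivity
  have hpoint : ∑ k ∈ range (n + 2), binomProb (n + 1) p k * (if k = M then 1 else 0) =
      binomProb (n + 1) p M := by
    rw [sum_eq_single M (fun k _ hk ↦ by simp [hk]) fun hM ↦ by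
      simp [binomProb_eq_zero_of_lt (not_lt.mp (mem_range.not.mp hM))]]
    simp
  have hstein : binomProb (n + 1) p M - poissonProb r M =
      ∑ k ∈ range (n + 2), binomProb (n + 1) p k * (r * f (k + 1) - k * f k) := by
    simp only [f, poissonSteinSol_spec hr, mul_sub, sum_sub_distrib, ← sum_mul, sum_binomProb,
      one_mul, hpoint]
  have hincr (k : ℕ) : f (k + 2) - f (k + 1) ≤ r⁻¹ :=
    (poissonSteinSol_succ_succ_sub_le hr M k).trans
      (by split_ifs; exacts [le_rfl, inv_nonneg.mpr hr.le])
  have key : binomProb (n + 1) p M - poissonProb r M ≤ p := by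
    rw [hstein, sum_binomProb_mul_stein]
    calc r * p * ∑ k ∈ range (n + 1), binomProb n p k * (f (k + 2) - f (k + 1))
        ≤ r * p * ∑ k ∈ range (n + 1), binomProb n p k * r⁻¹ := by
          gcongr with k
          exacts [binomProb_nonneg hp0.le hp1 _ _, hincr k]
      _ = p := by rw [← sum_mul, sum_binomProb]; field_simp
  linarith

theorem binomial_le_poisson_max_add_p_general (p : ℝ) (hp : 0 < p) (hp1 : p < 1)
    (M N : ℕ) :
    (N.choose M : ℝ) * p ^ M * (1 - p) ^ (N - M) ≤
      (M : ℝ) ^ M / (Real.exp M * (Nat.factorial M)) + p :=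
  calc (N.choose M : ℝ) * p ^ M * (1 - p) ^ (N - M) = binomProb N p M := rfl
    _ ≤ poissonProb (N * p) M + p := binomProb_le_poissonProb_add hp hp1.le N M
    _ ≤ poissonProb M M + p := by
        gcongr; exact poissonProb_le_poissonProb_self (by positivity) M
    _ = (M : ℝ) ^ M / (Real.exp M * (Nat.factorial M)) + p := by
        rw [poissonProb, exp_neg]; field_simp

/-- for every `p ∈ (0,1)` and integers `0 ≤ M ≤ N`,
`C(N,M) p^M (1-p)^{N-M} ≤ M^M/(e^M M!) + p` (with `0^0 = 1` for `M = 0`). -/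
theorem binomial_le_poisson_max_add_p (p : ℝ) (hp : 0 < p) (hp1 : p < 1)
    (M N : ℕ) (hMN : M ≤ N) :
    (N.choose M : ℝ) * p ^ M * (1 - p) ^ (N - M) ≤
      (M : ℝ) ^ M / (Real.exp M * (Nat.factorial M)) + p :=
  binomial_le_poisson_max_add_p_general p hp hp1 M N
end

section
/- Let m ≥ 1 and let g be a multilinear quadratic polynomial in s variables x₁,…,x_s with all coefficients in {0,1} and no constant term. Suppose that for every i ∈ [s], the polynomial g_i obtained from g by substituting x_i = 1 has fewer than m nonzero linear terms. Suppose further that for every variable x_j not appearing in a linear term of g, there is some variable x_i appearing in a linear term of g such that the monomial x_i x_j appears in g. Then s ≤ (m+1)²/4. -/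
open Finset

/-!
Let `l = |L|`. For `i ∈ L`, the linear terms of `g` with `x_i = 1` include the `l - 1` other
linear terms together with the quadratic neighbours of `i` outside `L`; hence each `i ∈ L` has at
most `m - l` neighbours outside `L`. Every variable outside `L` is such a neighbour, so
`s ≤ l + l (m - l) = l (m + 1 - l) ≤ (m + 1)² / 4`.
-/

theorem Finset.card_sdiff_add_card_le_card_erase_union_add_one {α : Type*} [DecidableEq α]
    (L B : Finset α) (i : α) :
    #(B \ L) + #L ≤ #(L.erase i ∪ B) + 1 := by
  rw [card_sdiff_add_card]
  calc #(B ∪ L) ≤ #(insert i (L.erase i ∪ B)) := by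
        refine card_le_card fun a ha => ?_
        rw [mem_union] at ha
        rw [mem_insert, mem_union, mem_erase]
        tauto
    _ ≤ #(L.erase i ∪ B) + 1 := card_insert_le _ _

namespace SimpleGraph

variable {V : Type*} [Fintype V] [DecidableEq V] (G : SimpleGraph V) [DecidableRel G.Adj]
  {L : Finset V}

theorem card_compl_le_sum_card_neighborFinset_sdiff (hL : ∀ j ∉ L, ∃ i ∈ L, G.Adj i j) :
    #Lᶜ ≤ ∑ i ∈ L, #(G.neighborFinset i \ L) := by
  refine le_trans (card_le_card fun j hj => ?_) card_biUnion_le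
  rw [mem_compl] at hj
  obtain ⟨i, hi, hij⟩ := hL j hj
  exact mem_biUnion.2 ⟨i, hi, mem_sdiff.2 ⟨(G.mem_neighborFinset i j).2 hij, hj⟩⟩

theorem card_add_card_sq_le {m : ℕ} (hsub : ∀ i ∈ L, #(L.erase i ∪ G.neighborFinset i) < m)
    (hL : ∀ j ∉ L, ∃ i ∈ L, G.Adj i j) :
    Fintype.card V + #L ^ 2 ≤ #L * (m + 1) := by
  have hlocal : ∀ i ∈ L, #(G.neighborFinset i \ L) + #L ≤ m := fun i hi =>
    (card_sdiff_add_card_le_card_erase_union_add_one L _ i).trans (hsub i hi)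
  have hsum : #Lᶜ + #L * #L ≤ #L * m := by
    calc #Lᶜ + #L * #L ≤ ∑ i ∈ L, (#(G.neighborFinset i \ L) + #L) := by
          rw [sum_add_distrib, sum_const, smul_eq_mul]
          exact Nat.add_le_add_right (G.card_compl_le_sum_card_neighborFinset_sdiff hL) _
      _ ≤ ∑ _i ∈ L, m := sum_le_sum hlocal
      _ = #L * m := by rw [sum_const, smul_eq_mul]
  have hsplit := card_compl_add_card L
  nlinarith

end SimpleGraph

theorem Gm_is_small_general (s m : ℕ)
    (L : Finset (Fin s)) (G : SimpleGraph (Fin s)) [DecidableRel G.Adj]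
    (hsub : ∀ i : Fin s, ((L.erase i) ∪ G.neighborFinset i).card < m)
    (hQ : ∀ j : Fin s, j ∉ L → ∃ i ∈ L, G.Adj i j) :
    (s : ℝ) ≤ ((m : ℝ) + 1) ^ 2 / 4 := by
  have h := G.card_add_card_sq_le (fun i _ => hsub i) hQ
  rw [Fintype.card_fin] at h
  have h' : (s : ℝ) + (#L : ℝ) ^ 2 ≤ #L * ((m : ℝ) + 1) := by exact_mod_cast h
  nlinarith [four_mul_le_sq_add (#L : ℝ) ((m : ℝ) + 1 - #L)]

/-- a multilinear quadratic polynomial `g` with `{0,1}` coefficients and no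
constant term is encoded by the set `L` of variables with a linear term and a simple graph `G`
recording the quadratic monomials. If for every `i` the substitution `x_i = 1` produces fewer
than `m` nonzero linear terms (i.e. `|(L \ {i}) ∪ N_G(i)| < m`), and every variable outside
`L` has a quadratic neighbour in `L`, then the number of variables `s` is at most `(m+1)²/4`. -/
theorem Gm_is_small (s m : ℕ) (hm : 1 ≤ m)
    (L : Finset (Fin s)) (G : SimpleGraph (Fin s)) [DecidableRel G.Adj]
    (hsub : ∀ i : Fin s, ((L.erase i) ∪ G.neighborFinset i).card < m)
    (hQ : ∀ j : Fin s, j ∉ L → ∃ i ∈ L, G.Adj i j) :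
    (s : ℝ) ≤ ((m : ℝ) + 1) ^ 2 / 4 :=
  Gm_is_small_general s m L G hsub hQ
end
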